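/- Let n ≥ 2 be an integer and S : (L^0)^n → (L^0)^n an injective map with the local property satisfying S(θ) = θ which maps each L^0-line onto an L^0-line. Then S is additive: S(x + y) = S(x) + S(y) for all x, y ∈ (L^0)^n. -/

import Mathlib

/-!
Statements from "The fundamental theorem of affine geometry in `(L⁰)ⁿ`" (Wu–Long).

`L⁰`, the algebra of equivalence classes (under `P`-a.e. equality) of real valued
random variables on a probability space `(Ω, F, P)`, is modeled as `Ω →ₘ[P] ℝ`,
and `(L⁰)ⁿ` as `Fin n → (Ω →ₘ[P] ℝ)` with the pointwise `L⁰`-module structure.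
-/

open MeasureTheory

noncomputable section

variable {Ω : Type*} [MeasurableSpace Ω] {P : Measure Ω}

/-- `L⁰ = Ω →ₘ[P] ℝ` is a commutative ring under the pointwise a.e. operations. -/
instance : CommRing (Ω →ₘ[P] ℝ) :=
  { (inferInstance : AddCommGroup (Ω →ₘ[P] ℝ)),
    (inferInstance : CommMonoid (Ω →ₘ[P] ℝ)) with
    left_distrib := fun a b c => AEEqFun.toGerm_injective <| by
      simp only [AEEqFun.mul_toGerm, AEEqFun.add_toGerm, mul_add]
    right_distrib := fun a b c => AEEqFun.toGerm_injective <| by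
      simp only [AEEqFun.mul_toGerm, AEEqFun.add_toGerm, add_mul]
    zero_mul := fun a => AEEqFun.toGerm_injective <| by
      simp only [AEEqFun.mul_toGerm, AEEqFun.zero_toGerm, zero_mul]
    mul_zero := fun a => AEEqFun.toGerm_injective <| by
      simp only [AEEqFun.mul_toGerm, AEEqFun.zero_toGerm, mul_zero] }

/-- `Ĩ_A` : the equivalence class of the indicator function of a measurable set `A`. -/
def ind (P : Measure Ω) {A : Set Ω} (hA : MeasurableSet A) : Ω →ₘ[P] ℝ :=
  AEEqFun.mk (A.indicator fun _ => (1 : ℝ)) (aestronglyMeasurable_const.indicator hA)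

/-!
Since `S` fixes `0` and preserves `L⁰`-lines, it maps `x + y`, the midpoint of `2 • x` and `2 • y`,
to some `α • S x + β • S y`. If `x` and `y` are `L⁰`-independent, then `α = 1`: on the support of
`1 - α`, a point of the image line through `S (x + y)` and `S x` becomes a multiple of `S y`, and
locality together with injectivity pulls this back to a dependence between `x` and `y`; by
symmetry `β = 1`. Locality transfers this to any measurable set on which `x` and `y` are pointwise
independent, by completing them with two coordinate vectors off that set. Where `y` is pointwise a
multiple of a nonzero `x`, choose `w` off the line of `x`: each of the pairs `(x + y, w)`,
`(x, y + w)`, `(y, w)` is then pointwise zero or independent, so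
`S (x + y) + S w = S (x + (y + w)) = S x + S y + S w`.
-/

section LinearAlgebra

variable {K V ι : Type*} [Field K] [AddCommGroup V] [Module K V]

theorem linearIndependent_pair_of_mul_ne {X Y : ι → K} {i j : ι}
    (h : X i * Y j ≠ X j * Y i) : LinearIndependent K ![X, Y] := by
  refine LinearIndependent.pair_iff.2 fun s t hst => ?_
  have hi := congrFun hst i
  have hj := congrFun hst j
  simp only [Pi.add_apply, Pi.smul_apply, smul_eq_mul, Pi.zero_apply] at hi hj
  have hdet := sub_ne_zero.2 h
  exact ⟨(mul_eq_zero.1 (by linear_combination Y j * hi - Y i * hj)).resolve_right hdet,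
    (mul_eq_zero.1 (by linear_combination X i * hj - X j * hi)).resolve_right hdet⟩

theorem exists_eq_smul_of_mul_eq_mul {X Y : ι → K} {i : ι} (hi : X i ≠ 0)
    (h : ∀ j, X i * Y j = X j * Y i) : ∃ c : K, Y = c • X :=
  ⟨Y i / X i, funext fun j => by
    rw [Pi.smul_apply, smul_eq_mul]
    field_simp
    linear_combination h j⟩

theorem linearIndependent_pair_single [DecidableEq ι] {X : ι → K} {i j : ι} (hij : i ≠ j)
    (hi : X i ≠ 0) : LinearIndependent K ![X, Pi.single j 1] :=
  linearIndependent_pair_of_mul_ne (i := i) (j := j) (by simpa [hij] using hi)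

theorem LinearIndependent.smul_eq_zero_or_pair_smul {X W : V}
    (h : LinearIndependent K ![X, W]) (c : K) :
    c • X = 0 ∨ LinearIndependent K ![c • X, W] := by
  rcases eq_or_ne c 0 with rfl | hc
  · exact Or.inl (zero_smul K X)
  · right
    simpa using (LinearIndependent.pair_smul_smul_iff (IsUnit.mk0 c hc) isUnit_one).2 h

end LinearAlgebra

section Lines

variable (R : Type*) {M : Type*} [CommRing R] [AddCommGroup M] [Module R M]

def MapsLinesOnto (S : M → M) : Prop :=
  ∀ x y : M, x ≠ y → S '' {z | ∃ lam : R, z = lam • x + (1 - lam) • y} =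
    {z | ∃ lam : R, z = lam • S x + (1 - lam) • S y}

variable {R} {S : M → M}

namespace MapsLinesOnto

theorem exists_map_eq (hS : MapsLinesOnto R S) (x y : M) (lam : R) :
    ∃ μ : R, S (lam • x + (1 - lam) • y) = μ • S x + (1 - μ) • S y := by
  rcases eq_or_ne x y with rfl | hxy
  · exact ⟨1, by simp [← add_smul]⟩
  · exact (hS x y hxy).subset ⟨_, ⟨lam, rfl⟩, rfl⟩

theorem exists_eq_map (hS : MapsLinesOnto R S) (x y : M) (μ : R) :
    ∃ lam : R, S (lam • x + (1 - lam) • y) = μ • S x + (1 - μ) • S y := by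
  rcases eq_or_ne x y with rfl | hxy
  · exact ⟨1, by simp [← add_smul]⟩
  · obtain ⟨z, ⟨lam, rfl⟩, hz⟩ := (hS x y hxy).superset ⟨μ, rfl⟩
    exact ⟨lam, hz⟩

theorem exists_map_smul (hS : MapsLinesOnto R S) (h0 : S 0 = 0) (c : R) (x : M) :
    ∃ p : R, S (c • x) = p • S x := by
  obtain ⟨p, hp⟩ := hS.exists_map_eq x 0 c
  exact ⟨p, by simpa [h0] using hp⟩

theorem exists_map_smul_eq (hS : MapsLinesOnto R S) (h0 : S 0 = 0) (c : R) (x : M) :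
    ∃ p : R, S (p • x) = c • S x := by
  obtain ⟨p, hp⟩ := hS.exists_eq_map x 0 c
  exact ⟨p, by simpa [h0] using hp⟩

theorem exists_map_add (hS : MapsLinesOnto R S) (h0 : S 0 = 0) (h2 : IsUnit (2 : R))
    (x y : M) : ∃ α β : R, S (x + y) = α • S x + β • S y := by
  obtain ⟨half, hhalf⟩ := h2.exists_left_inv
  obtain ⟨p, hp⟩ := hS.exists_map_smul h0 2 x
  obtain ⟨q, hq⟩ := hS.exists_map_smul h0 2 y
  obtain ⟨μ, hμ⟩ := hS.exists_map_eq ((2 : R) • x) ((2 : R) • y) half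
  have hmid : half • (2 : R) • x + (1 - half) • (2 : R) • y = x + y := by
    linear_combination (norm := module) hhalf • (x - y)
  refine ⟨μ * p, (1 - μ) * q, ?_⟩
  rw [← hmid, hμ, hp, hq, smul_smul, smul_smul]

end MapsLinesOnto

end Lines

theorem eq_of_smul_eq_of_one_sub_smul_eq {R M : Type*} [Ring R] [AddCommGroup M] [Module R M]
    {e : R} {u v : M} (h₁ : e • u = e • v) (h₂ : (1 - e) • u = (1 - e) • v) : u = v := by
  simpa [sub_smul, h₁] using h₂

section EvalAt

variable {ι : Type*} {A : Set Ω}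

theorem coeFn_ind (hA : MeasurableSet A) : ⇑(ind P hA) =ᵐ[P] A.indicator fun _ => 1 :=
  AEEqFun.coeFn_mk _ _

theorem ind_mul_self (hA : MeasurableSet A) : ind P hA * ind P hA = ind P hA := by
  refine AEEqFun.ext ?_
  filter_upwards [AEEqFun.coeFn_mul (ind P hA) (ind P hA), coeFn_ind hA] with ω h h'
  by_cases hω : ω ∈ A <;> simp [h, h', hω]

theorem ind_compl (hA : MeasurableSet A) : ind P hA.compl = 1 - ind P hA := by
  refine AEEqFun.ext ?_
  filter_upwards [coeFn_ind hA.compl, AEEqFun.coeFn_sub 1 (ind P hA),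
    AEEqFun.coeFn_one (μ := P) (β := ℝ), coeFn_ind hA] with ω h₁ h₂ h₃ h₄
  by_cases hω : ω ∈ A <;> simp [h₁, h₂, h₃, h₄, hω]

theorem exists_ind_mul_eq_self_and_mul_eq_ind (γ : Ω →ₘ[P] ℝ) :
    ∃ (A : Set Ω) (hA : MeasurableSet A) (t : Ω →ₘ[P] ℝ),
      ind P hA * γ = γ ∧ t * γ = ind P hA := by
  have hA : MeasurableSet {ω | γ ω ≠ 0} := (γ.measurable (measurableSet_singleton 0)).compl
  have ht := γ.measurable.inv.aestronglyMeasurable (μ := P)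
  refine ⟨_, hA, AEEqFun.mk _ ht, AEEqFun.ext ?_, AEEqFun.ext ?_⟩
  · filter_upwards [AEEqFun.coeFn_mul (ind P hA) γ, coeFn_ind hA] with ω h₁ h₂
    by_cases hω : γ ω = 0 <;> simp [h₁, h₂, hω]
  · filter_upwards [AEEqFun.coeFn_mul (AEEqFun.mk _ ht) γ, AEEqFun.coeFn_mk _ ht,
      coeFn_ind hA] with ω h₁ h₂ h₃
    by_cases hω : γ ω = 0 <;> simp [h₁, h₂, h₃, hω]

theorem MeasureTheory.AEEqFun.isUnit_two : IsUnit (2 : Ω →ₘ[P] ℝ) := by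
  refine .of_mul_eq_one (AEEqFun.const Ω (2⁻¹ : ℝ)) (AEEqFun.ext ?_)
  rw [← one_add_one_eq_two]
  filter_upwards [AEEqFun.coeFn_mul (1 + 1) (AEEqFun.const Ω (2⁻¹ : ℝ)),
    AEEqFun.coeFn_add (1 : Ω →ₘ[P] ℝ) 1, AEEqFun.coeFn_one (μ := P) (β := ℝ),
    AEEqFun.coeFn_const Ω (2⁻¹ : ℝ)] with ω h₁ h₂ h₃ h₄
  simp only [h₁, h₂, h₃, h₄, Pi.mul_apply, Pi.add_apply, Pi.one_apply]
  norm_num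

def patch (hA : MeasurableSet A) (u v : ι → Ω →ₘ[P] ℝ) : ι → Ω →ₘ[P] ℝ :=
  ind P hA • u + (1 - ind P hA) • v

theorem ind_smul_patch (hA : MeasurableSet A) (u v : ι → Ω →ₘ[P] ℝ) :
    ind P hA • patch hA u v = ind P hA • u := by
  have := ind_mul_self (P := P) hA
  rw [patch]
  linear_combination (norm := module) this • (u - v)

theorem one_sub_ind_smul_patch (hA : MeasurableSet A) (u v : ι → Ω →ₘ[P] ℝ) :
    (1 - ind P hA) • patch hA u v = (1 - ind P hA) • v := by
  have := ind_mul_self (P := P) hA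
  rw [patch]
  linear_combination (norm := module) this • (v - u)

def evalAt (x : ι → Ω →ₘ[P] ℝ) (ω : Ω) : ι → ℝ := fun i => x i ω

theorem measurable_evalAt (x : ι → Ω →ₘ[P] ℝ) : Measurable (evalAt x) :=
  measurable_pi_lambda _ fun i => (x i).measurable

theorem ext_evalAt {u v : ι → Ω →ₘ[P] ℝ} (h : ∀ᵐ ω ∂P, evalAt u ω = evalAt v ω) : u = v :=
  funext fun i => AEEqFun.ext (h.mono fun _ hω => congrFun hω i)

theorem ae_evalAt_zero : ∀ᵐ ω ∂P, evalAt (0 : ι → Ω →ₘ[P] ℝ) ω = 0 := by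
  filter_upwards [AEEqFun.coeFn_zero (μ := P) (β := ℝ)] with ω h
  exact funext fun _ => h

theorem ae_evalAt_single [DecidableEq ι] (i : ι) :
    ∀ᵐ ω ∂P, evalAt (Pi.single i 1 : ι → Ω →ₘ[P] ℝ) ω = Pi.single i 1 := by
  filter_upwards [AEEqFun.coeFn_zero (μ := P) (β := ℝ), AEEqFun.coeFn_one (μ := P) (β := ℝ)]
    with ω h₀ h₁
  funext j
  by_cases hj : j = i
  · subst hj
    simpa [evalAt] using h₁
  · simpa [evalAt, hj] using h₀

variable [Countable ι]

theorem ae_evalAt_add (x y : ι → Ω →ₘ[P] ℝ) :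
    ∀ᵐ ω ∂P, evalAt (x + y) ω = evalAt x ω + evalAt y ω := by
  filter_upwards [ae_all_iff.2 fun i => AEEqFun.coeFn_add (x i) (y i)] with ω h
  exact funext h

theorem ae_evalAt_smul (a : Ω →ₘ[P] ℝ) (x : ι → Ω →ₘ[P] ℝ) :
    ∀ᵐ ω ∂P, evalAt (a • x) ω = a ω • evalAt x ω := by
  filter_upwards [ae_all_iff.2 fun i => AEEqFun.coeFn_mul a (x i)] with ω h
  exact funext h

theorem ae_evalAt_ind_smul (hA : MeasurableSet A) (x : ι → Ω →ₘ[P] ℝ) :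
    ∀ᵐ ω ∂P, evalAt (ind P hA • x) ω = A.indicator (evalAt x) ω := by
  filter_upwards [ae_evalAt_smul (ind P hA) x, coeFn_ind hA] with ω h₁ h₂
  by_cases hω : ω ∈ A <;> simp [h₁, h₂, hω]

theorem ind_smul_eq_ind_smul_iff (hA : MeasurableSet A) {u v : ι → Ω →ₘ[P] ℝ} :
    ind P hA • u = ind P hA • v ↔ ∀ᵐ ω ∂P, ω ∈ A → evalAt u ω = evalAt v ω := by
  constructor
  · intro h
    filter_upwards [ae_evalAt_ind_smul hA u, ae_evalAt_ind_smul hA v] with ω hu hv hω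
    simpa [hu, hv, hω] using congrArg (evalAt · ω) h
  · intro h
    refine ext_evalAt ?_
    filter_upwards [h, ae_evalAt_ind_smul hA u, ae_evalAt_ind_smul hA v] with ω h hu hv
    by_cases hω : ω ∈ A <;> simp [hu, hv, hω, h]

theorem ae_evalAt_patch (hA : MeasurableSet A) (u v : ι → Ω →ₘ[P] ℝ) :
    ∀ᵐ ω ∂P, (ω ∈ A → evalAt (patch hA u v) ω = evalAt u ω) ∧
      (ω ∉ A → evalAt (patch hA u v) ω = evalAt v ω) := by
  filter_upwards [ae_evalAt_add (ind P hA • u) (ind P hA.compl • v), ae_evalAt_ind_smul hA u,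
    ae_evalAt_ind_smul hA.compl v] with ω h h₁ h₂
  rw [patch, ← ind_compl, h, h₁, h₂]
  constructor <;> intro hω <;> simp [hω]

theorem linearIndependent_pair_of_ae {x y : ι → Ω →ₘ[P] ℝ}
    (h : ∀ᵐ ω ∂P, LinearIndependent ℝ ![evalAt x ω, evalAt y ω]) :
    LinearIndependent (Ω →ₘ[P] ℝ) ![x, y] := by
  refine LinearIndependent.pair_iff.2 fun a b hab => ?_
  have hzero : ∀ᵐ ω ∂P, a ω = 0 ∧ b ω = 0 := by
    filter_upwards [h, ae_evalAt_add (a • x) (b • y), ae_evalAt_smul a x, ae_evalAt_smul b y,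
      ae_evalAt_zero (ι := ι)] with ω hω h₁ h₂ h₃ h₀
    refine LinearIndependent.pair_iff.1 hω _ _ ?_
    rw [← h₂, ← h₃, ← h₁, hab, h₀]
  constructor <;> refine AEEqFun.ext ?_ <;>
    filter_upwards [hzero, AEEqFun.coeFn_zero (μ := P) (β := ℝ)] with ω h h₀
  exacts [h.1.trans h₀.symm, h.2.trans h₀.symm]

theorem exists_ae_linearIndependent_pair [DecidableEq ι] {i₀ i₁ : ι}
    (h₀₁ : i₀ ≠ i₁) (x : ι → Ω →ₘ[P] ℝ) : ∃ w : ι → Ω →ₘ[P] ℝ,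
      ∀ᵐ ω ∂P, evalAt x ω ≠ 0 → LinearIndependent ℝ ![evalAt x ω, evalAt w ω] := by
  have hB : MeasurableSet {ω | x i₁ ω = 0} := (x i₁).measurable (measurableSet_singleton 0)
  refine ⟨patch hB (Pi.single i₁ 1) (Pi.single i₀ 1), ?_⟩
  filter_upwards [ae_evalAt_patch hB (Pi.single i₁ 1) (Pi.single i₀ 1), ae_evalAt_single i₀,
    ae_evalAt_single i₁] with ω hw h₀ h₁ hx
  by_cases hω : x i₁ ω = 0
  · obtain ⟨j, hj⟩ := Function.ne_iff.1 hx
    rw [hw.1 hω, h₁]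
    exact linearIndependent_pair_single (by rintro rfl; exact hj hω) hj
  · rw [hw.2 hω, h₀]
    exact linearIndependent_pair_single h₀₁.symm hω

end EvalAt

section LocalLinePreserving

variable {ι : Type*}

structure IsLocalLinePreserving (S : (ι → Ω →ₘ[P] ℝ) → ι → Ω →ₘ[P] ℝ) : Prop where
  injective : Function.Injective S
  ind_smul_map_ind_smul : ∀ (x : ι → Ω →ₘ[P] ℝ) (A : Set Ω) (hA : MeasurableSet A),
    ind P hA • S (ind P hA • x) = ind P hA • S x
  map_zero : S 0 = 0
  mapsLinesOnto : MapsLinesOnto (Ω →ₘ[P] ℝ) S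

namespace IsLocalLinePreserving

variable {S : (ι → Ω →ₘ[P] ℝ) → ι → Ω →ₘ[P] ℝ} {A : Set Ω} {u v x y : ι → Ω →ₘ[P] ℝ}

theorem ind_smul_map_eq (hS : IsLocalLinePreserving S) (hA : MeasurableSet A)
    (h : ind P hA • u = ind P hA • v) : ind P hA • S u = ind P hA • S v := by
  rw [← hS.ind_smul_map_ind_smul u A hA, h, hS.ind_smul_map_ind_smul v A hA]

theorem one_sub_ind_smul_map_eq (hS : IsLocalLinePreserving S) (hA : MeasurableSet A)
    (h : (1 - ind P hA) • u = (1 - ind P hA) • v) :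
    (1 - ind P hA) • S u = (1 - ind P hA) • S v := by
  rw [← ind_compl] at h ⊢
  exact hS.ind_smul_map_eq hA.compl h

theorem ind_smul_eq_of_ind_smul_map_eq (hS : IsLocalLinePreserving S) (hA : MeasurableSet A)
    (h : ind P hA • S u = ind P hA • S v) : ind P hA • u = ind P hA • v := by
  have hpatch : S (patch hA u v) = S v := eq_of_smul_eq_of_one_sub_smul_eq
    ((hS.ind_smul_map_eq hA (ind_smul_patch hA u v)).trans h)
    (hS.one_sub_ind_smul_map_eq hA (one_sub_ind_smul_patch hA u v))
  rw [← ind_smul_patch hA u v, hS.injective hpatch]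

theorem eq_one_of_map_add_eq (hS : IsLocalLinePreserving S)
    (hxy : LinearIndependent (Ω →ₘ[P] ℝ) ![x, y]) {α β : Ω →ₘ[P] ℝ}
    (h : S (x + y) = α • S x + β • S y) : α = 1 := by
  obtain ⟨A, hA, t, hγ, ht⟩ := exists_ind_mul_eq_self_and_mul_eq_ind (1 - α)
  have he := ind_mul_self (P := P) hA
  obtain ⟨lam, hlam⟩ := hS.mapsLinesOnto.exists_eq_map (x + y) x t
  obtain ⟨p, hp⟩ := hS.mapsLinesOnto.exists_map_smul_eq hS.map_zero (t * β) y
  -- `t * (1 - α)` is the indicator of `A`, so on `A` the `S x`-components cancel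
  have hmap : ind P hA • S (lam • (x + y) + (1 - lam) • x) = ind P hA • S (p • y) := by
    rw [hlam, hp, h]
    linear_combination (norm := module) (-ind P hA * ht - he) • S x
  have hA0 : ind P hA = 0 := (LinearIndependent.pair_iff.1 hxy (ind P hA)
    (ind P hA * lam - ind P hA * p)
    (by linear_combination (norm := module) hS.ind_smul_eq_of_ind_smul_map_eq hA hmap)).1
  rw [hA0, zero_mul] at hγ
  exact (sub_eq_zero.1 hγ.symm).symm

theorem map_add_of_linearIndependent (hS : IsLocalLinePreserving S)
    (hxy : LinearIndependent (Ω →ₘ[P] ℝ) ![x, y]) : S (x + y) = S x + S y := by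
  obtain ⟨α, β, h⟩ := hS.mapsLinesOnto.exists_map_add hS.map_zero AEEqFun.isUnit_two x y
  have hα := hS.eq_one_of_map_add_eq hxy h
  have hβ := hS.eq_one_of_map_add_eq (LinearIndependent.pair_symm_iff.1 hxy)
    (by rw [add_comm, h, add_comm])
  rw [h, hα, hβ, one_smul, one_smul]

variable [Countable ι]

theorem ind_smul_map_add_of_ae_eq_zero (hS : IsLocalLinePreserving S) (hA : MeasurableSet A)
    (h : ∀ᵐ ω ∂P, ω ∈ A → evalAt x ω = 0) :
    ind P hA • S (x + y) = ind P hA • (S x + S y) := by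
  have hx : ind P hA • x = 0 := by
    rw [← smul_zero (ind P hA), ind_smul_eq_ind_smul_iff]
    filter_upwards [h, ae_evalAt_zero (ι := ι)] with ω h h₀ hω using (h hω).trans h₀.symm
  have hSx : ind P hA • S x = 0 := by
    rw [hS.ind_smul_map_eq hA (hx.trans (smul_zero _).symm), hS.map_zero, smul_zero]
  rw [smul_add, hSx, zero_add]
  exact hS.ind_smul_map_eq hA (by rw [smul_add, hx, zero_add])

theorem ind_smul_map_add_of_ae_linearIndependent [DecidableEq ι] (hS : IsLocalLinePreserving S)
    {i₀ i₁ : ι} (h₀₁ : i₀ ≠ i₁) (hA : MeasurableSet A)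
    (h : ∀ᵐ ω ∂P, ω ∈ A → LinearIndependent ℝ ![evalAt x ω, evalAt y ω]) :
    ind P hA • S (x + y) = ind P hA • (S x + S y) := by
  have hli : LinearIndependent (Ω →ₘ[P] ℝ)
      ![patch hA x (Pi.single i₀ 1), patch hA y (Pi.single i₁ 1)] := by
    refine linearIndependent_pair_of_ae ?_
    filter_upwards [h, ae_evalAt_patch hA x (Pi.single i₀ 1),
      ae_evalAt_patch hA y (Pi.single i₁ 1), ae_evalAt_single i₀, ae_evalAt_single i₁]
      with ω hω hx hy h₀ h₁
    by_cases hωA : ω ∈ A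
    · rw [hx.1 hωA, hy.1 hωA]
      exact hω hωA
    · rw [hx.2 hωA, hy.2 hωA, h₀, h₁]
      exact linearIndependent_pair_single h₀₁ (by simp)
  have hx := ind_smul_patch hA x (Pi.single i₀ 1)
  have hy := ind_smul_patch hA y (Pi.single i₁ 1)
  calc ind P hA • S (x + y)
      = ind P hA • S (patch hA x (Pi.single i₀ 1) + patch hA y (Pi.single i₁ 1)) :=
        hS.ind_smul_map_eq hA (by rw [smul_add, smul_add, hx, hy])
    _ = ind P hA • (S x + S y) := by
        rw [hS.map_add_of_linearIndependent hli, smul_add, smul_add, hS.ind_smul_map_eq hA hx,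
          hS.ind_smul_map_eq hA hy]

theorem ind_smul_map_add [DecidableEq ι] (hS : IsLocalLinePreserving S) {i₀ i₁ : ι}
    (h₀₁ : i₀ ≠ i₁) (hA : MeasurableSet A)
    (h : ∀ᵐ ω ∂P, ω ∈ A → evalAt x ω = 0 ∨ evalAt y ω = 0 ∨
      LinearIndependent ℝ ![evalAt x ω, evalAt y ω]) :
    ind P hA • S (x + y) = ind P hA • (S x + S y) := by
  have hX := measurable_evalAt x (measurableSet_singleton 0)
  have hY := measurable_evalAt y (measurableSet_singleton 0)
  have h₁ := hS.ind_smul_map_add_of_ae_eq_zero (y := y) (hA.inter hX)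
    (.of_forall fun _ hω => hω.2)
  have h₂ := hS.ind_smul_map_add_of_ae_eq_zero (y := x) (hA.inter hY)
    (.of_forall fun _ hω => hω.2)
  rw [add_comm y, add_comm (S y)] at h₂
  have h₃ := hS.ind_smul_map_add_of_ae_linearIndependent h₀₁ ((hA.inter hX.compl).inter hY.compl)
    (by filter_upwards [h] with ω h hω using ((h hω.1.1).resolve_left hω.1.2).resolve_left hω.2)
  rw [ind_smul_eq_ind_smul_iff] at h₁ h₂ h₃ ⊢
  filter_upwards [h₁, h₂, h₃] with ω h₁ h₂ h₃ hω
  by_cases hx : evalAt x ω = 0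
  · exact h₁ ⟨hω, hx⟩
  by_cases hy : evalAt y ω = 0
  · exact h₂ ⟨hω, hy⟩
  exact h₃ ⟨⟨hω, hx⟩, hy⟩

theorem ind_smul_map_add_of_ae_eq_smul [DecidableEq ι] (hS : IsLocalLinePreserving S)
    {i₀ i₁ : ι} (h₀₁ : i₀ ≠ i₁) (hA : MeasurableSet A) {w : ι → Ω →ₘ[P] ℝ}
    (h : ∀ᵐ ω ∂P, ω ∈ A → ∃ c : ℝ, evalAt y ω = c • evalAt x ω ∧
      LinearIndependent ℝ ![evalAt x ω, evalAt w ω]) :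
    ind P hA • S (x + y) = ind P hA • (S x + S y) := by
  have hxy_w := hS.ind_smul_map_add h₀₁ hA (x := x + y) (y := w) (by
    filter_upwards [h, ae_evalAt_add x y] with ω h hxy hω
    obtain ⟨c, hc, hli⟩ := h hω
    rw [hxy, hc, show evalAt x ω + c • evalAt x ω = (1 + c) • evalAt x ω by
      rw [add_smul, one_smul]]
    rcases hli.smul_eq_zero_or_pair_smul (1 + c) with h | h
    exacts [Or.inl h, Or.inr (Or.inr h)])
  have hx_yw := hS.ind_smul_map_add h₀₁ hA (x := x) (y := y + w) (by
    filter_upwards [h, ae_evalAt_add y w] with ω h hyw hω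
    obtain ⟨c, hc, hli⟩ := h hω
    rw [hyw, hc]
    exact Or.inr (Or.inr ((LinearIndependent.pair_add_smul_right_iff c).2 hli)))
  have hy_w := hS.ind_smul_map_add h₀₁ hA (x := y) (y := w) (by
    filter_upwards [h] with ω h hω
    obtain ⟨c, hc, hli⟩ := h hω
    rw [hc]
    rcases hli.smul_eq_zero_or_pair_smul c with h | h
    exacts [Or.inl h, Or.inr (Or.inr h)])
  rw [add_assoc, hx_yw, smul_add, smul_add, hy_w, smul_add] at hxy_w
  rw [smul_add]
  exact add_right_cancel (hxy_w.symm.trans (add_assoc _ _ _).symm)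

theorem map_add [DecidableEq ι] (hS : IsLocalLinePreserving S) {i₀ i₁ : ι} (h₀₁ : i₀ ≠ i₁)
    (x y : ι → Ω →ₘ[P] ℝ) : S (x + y) = S x + S y := by
  obtain ⟨w, hw⟩ := exists_ae_linearIndependent_pair (P := P) h₀₁ x
  set B := {ω | evalAt x ω ≠ 0 ∧ ∀ i j, x i ω * y j ω = x j ω * y i ω}
  have hB : MeasurableSet B := by
    have hdep : MeasurableSet {ω | ∀ i j, x i ω * y j ω = x j ω * y i ω} := by
      simp_rw [Set.ofPred_forall]
      exact .iInter fun i => .iInter fun j => measurableSet_eq_fun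
        ((x i).measurable.mul (y j).measurable) ((x j).measurable.mul (y i).measurable)
    exact (measurable_evalAt x (measurableSet_singleton 0)).compl.inter hdep
  refine eq_of_smul_eq_of_one_sub_smul_eq (e := ind P hB) ?_ ?_
  · refine hS.ind_smul_map_add_of_ae_eq_smul h₀₁ hB (w := w) ?_
    filter_upwards [hw] with ω hw hω
    obtain ⟨i, hi⟩ := Function.ne_iff.1 hω.1
    obtain ⟨c, hc⟩ := exists_eq_smul_of_mul_eq_mul hi (hω.2 i)
    exact ⟨c, hc, hw hω.1⟩
  · rw [← ind_compl]
    refine hS.ind_smul_map_add h₀₁ hB.compl (.of_forall fun ω hω => ?_)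
    by_cases hx : evalAt x ω = 0
    · exact Or.inl hx
    obtain ⟨i, j, hij⟩ : ∃ i j, x i ω * y j ω ≠ x j ω * y i ω := by
      simpa [B, hx] using hω
    exact Or.inr (Or.inr (linearIndependent_pair_of_mul_ne hij))

end IsLocalLinePreserving

end LocalLinePreserving

theorem additive_general
    (n : ℕ) (hn : 2 ≤ n)
    (S : (Fin n → Ω →ₘ[P] ℝ) → (Fin n → Ω →ₘ[P] ℝ))
    (hinj : Function.Injective S)
    (hloc : ∀ (x : Fin n → Ω →ₘ[P] ℝ) (A : Set Ω) (hA : MeasurableSet A),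
        ind P hA • S (ind P hA • x) = ind P hA • S x)
    (hS0 : S 0 = 0)
    (hline : ∀ x y : Fin n → Ω →ₘ[P] ℝ, x ≠ y →
        S '' {z | ∃ lam : Ω →ₘ[P] ℝ, z = lam • x + (1 - lam) • y}
          = {z | ∃ lam : Ω →ₘ[P] ℝ, z = lam • S x + (1 - lam) • S y}) :
    ∀ x y : Fin n → Ω →ₘ[P] ℝ, S (x + y) = S x + S y :=
  IsLocalLinePreserving.map_add ⟨hinj, hloc, hS0, hline⟩ (i₀ := ⟨0, by omega⟩)
    (i₁ := ⟨1, by omega⟩) (by simp)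

/-- Step 3 of the proof of Theorem 3.1: `S` as in the fundamental
theorem is additive. -/
theorem additive
    [IsProbabilityMeasure P] (n : ℕ) (hn : 2 ≤ n)
    (S : (Fin n → Ω →ₘ[P] ℝ) → (Fin n → Ω →ₘ[P] ℝ))
    (hinj : Function.Injective S)
    (hloc : ∀ (x : Fin n → Ω →ₘ[P] ℝ) (A : Set Ω) (hA : MeasurableSet A),
        ind P hA • S (ind P hA • x) = ind P hA • S x)
    (hS0 : S 0 = 0)
    (hline : ∀ x y : Fin n → Ω →ₘ[P] ℝ, x ≠ y →
        S '' {z | ∃ lam : Ω →ₘ[P] ℝ, z = lam • x + (1 - lam) • y}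
          = {z | ∃ lam : Ω →ₘ[P] ℝ, z = lam • S x + (1 - lam) • S y}) :
    ∀ x y : Fin n → Ω →ₘ[P] ℝ, S (x + y) = S x + S y :=
  additive_general n hn S hinj hloc hS0 hline
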